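/- Let (X,r) be a finite left non-degenerate set-theoretic solution of the Yang–Baxter equation. Then both the left derived structure monoid A(X,r) and the structure monoid M(X,r) satisfy the ascending chain condition on right ideals, and furthermore A(X,r) satisfies the ascending chain condition on left ideals. -/

import Mathlib

open scoped Pointwise ENNReal

namespace YBE

variable {X : Type*}

/-- `r` acting on the first two coordinates of a triple. -/
def r12 (r : X × X → X × X) : X × X × X → X × X × X :=
  fun p => ((r (p.1, p.2.1)).1, (r (p.1, p.2.1)).2, p.2.2)

/-- `r` acting on the last two coordinates of a triple. -/
def r23 (r : X × X → X × X) : X × X × X → X × X × X :=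
  fun p => (p.1, r (p.2.1, p.2.2))

/-- `(X, r)` is a set-theoretic solution of the Yang–Baxter equation. -/
def IsYB (r : X × X → X × X) : Prop :=
  r12 r ∘ r23 r ∘ r12 r = r23 r ∘ r12 r ∘ r23 r

/-- The map `λ_x`, i.e. `r (x, y) = (λ_x y, ρ_y x)`. -/
def lmap (r : X × X → X × X) (x y : X) : X := (r (x, y)).1

/-- The map `ρ_y`, i.e. `r (x, y) = (λ_x y, ρ_y x)`. -/
def rmap (r : X × X → X × X) (y x : X) : X := (r (x, y)).2

/-- A solution is left non-degenerate when all maps `λ_x` are bijective. -/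
def LeftNonDeg (r : X × X → X × X) : Prop := ∀ x, Function.Bijective (lmap r x)

/-- A solution is non-degenerate when all `λ_x` and all `ρ_y` are bijective. -/
def NonDeg (r : X × X → X × X) : Prop :=
  (∀ x, Function.Bijective (lmap r x)) ∧ (∀ y, Function.Bijective fun x => rmap r y x)

/-- A classical inverse of a self-map of `X` (the inverse map when the map is bijective). -/
noncomputable def pinv (f : X → X) (y : X) : X :=
  letI := Classical.propDecidable (∃ x, f x = y)
  if h : ∃ x, f x = y then h.choose else y

/-- `σ_x (y) = λ_x (ρ_{λ_y⁻¹(x)} (y))`. -/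
noncomputable def sigmaMap (r : X × X → X × X) (x y : X) : X :=
  lmap r x (rmap r (pinv (lmap r y) x) y)

/-- The left derived solution `s (x, y) = (y, σ_y (x))`. -/
noncomputable def dmap (r : X × X → X × X) : X × X → X × X :=
  fun p => (p.2, sigmaMap r p.2 p.1)

/-- The defining relations `x ∘ y = λ_x(y) ∘ ρ_y(x)` of the structure monoid. -/
def structRel (r : X × X → X × X) : FreeMonoid X → FreeMonoid X → Prop :=
  fun w₁ w₂ => ∃ x y : X,
    w₁ = FreeMonoid.of x * FreeMonoid.of y ∧
    w₂ = FreeMonoid.of (lmap r x y) * FreeMonoid.of (rmap r y x)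

/-- The congruence generated by the defining relations of the structure monoid. -/
def structCon (r : X × X → X × X) : Con (FreeMonoid X) := conGen (structRel r)

/-- The structure monoid `M(X,r)`.  The left derived structure monoid `A(X,r)` is
`SM (dmap r)`, the structure monoid of the left derived solution. -/
abbrev SM (r : X × X → X × X) : Type _ := (structCon r).Quotient

/-- The canonical generators of the structure monoid. -/
def gen (r : X × X → X × X) (x : X) : SM r := (structCon r).mk' (FreeMonoid.of x)

/-- The extension of `λ` to the free monoid, with values in the monoid of self-maps of `X`. -/
def lamFree (r : X × X → X × X) : FreeMonoid X →* Function.End X :=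
  FreeMonoid.lift fun x => (lmap r x : Function.End X)

theorem lmap_lmap {r : X × X → X × X} (h : IsYB r) (x y z : X) :
    lmap r (lmap r x y) (lmap r (rmap r y x) z) = lmap r x (lmap r y z) :=
  congrArg (fun p : X × X × X => p.1) (congrFun h (x, y, z))

theorem structCon_le_ker_lamFree {r : X × X → X × X} (h : IsYB r) :
    structCon r ≤ Con.ker (lamFree r) := by
  refine Con.conGen_le.mpr ?_
  rintro w₁ w₂ ⟨x, y, rfl, rfl⟩
  refine (Con.ker_rel _).mpr ?_
  simp only [map_mul]
  simp only [lamFree, FreeMonoid.lift_eval_of]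
  funext z
  exact (lmap_lmap h x y z).symm

/-- The extension of `λ` to the structure monoid `M(X,r)` (a monoid homomorphism to the
monoid of self-maps of `X`). -/
def lam {r : X × X → X × X} (h : IsYB r) : SM r →* Function.End X :=
  Con.lift _ (lamFree r) (structCon_le_ker_lamFree h)

/-- The relators of the structure group `G(X,r)`. -/
def structRelators (r : X × X → X × X) : Set (FreeGroup X) :=
  {w | ∃ x y : X, w = FreeGroup.of x * FreeGroup.of y *
    (FreeGroup.of (lmap r x y) * FreeGroup.of (rmap r y x))⁻¹}

/-- The structure group `G(X,r)`. -/
abbrev SG (r : X × X → X × X) : Type _ := PresentedGroup (structRelators r)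

def toSGfree (r : X × X → X × X) : FreeMonoid X →* SG r :=
  FreeMonoid.lift fun x => PresentedGroup.of x

theorem structCon_le_ker_toSGfree (r : X × X → X × X) :
    structCon r ≤ Con.ker (toSGfree r) := by
  refine Con.conGen_le.mpr ?_
  rintro w₁ w₂ ⟨x, y, rfl, rfl⟩
  refine (Con.ker_rel _).mpr ?_
  simp only [map_mul, toSGfree, FreeMonoid.lift_eval_of]
  have hmem : FreeGroup.of x * FreeGroup.of y *
      (FreeGroup.of (lmap r x y) * FreeGroup.of (rmap r y x))⁻¹ ∈
      Subgroup.normalClosure (structRelators r) :=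
    Subgroup.subset_normalClosure ⟨x, y, rfl⟩
  show (QuotientGroup.mk (FreeGroup.of x * FreeGroup.of y) :
      FreeGroup X ⧸ Subgroup.normalClosure (structRelators r)) =
    QuotientGroup.mk (FreeGroup.of (lmap r x y) * FreeGroup.of (rmap r y x))
  rw [QuotientGroup.eq]
  have hconj := (Subgroup.normalClosure_normal (s := structRelators r)).conj_mem _
    (Subgroup.inv_mem _ hmem) (FreeGroup.of x * FreeGroup.of y)⁻¹
  have heq : (FreeGroup.of x * FreeGroup.of y)⁻¹ *
      (FreeGroup.of (lmap r x y) * FreeGroup.of (rmap r y x)) =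
      (FreeGroup.of x * FreeGroup.of y)⁻¹ *
        (FreeGroup.of x * FreeGroup.of y *
          (FreeGroup.of (lmap r x y) * FreeGroup.of (rmap r y x))⁻¹)⁻¹ *
        ((FreeGroup.of x * FreeGroup.of y)⁻¹)⁻¹ := by group
  rw [heq]
  exact hconj

/-- The canonical monoid homomorphism from the structure monoid to the structure group. -/
def toSG (r : X × X → X × X) : SM r →* SG r :=
  Con.lift _ (toSGfree r) (structCon_le_ker_toSGfree r)

/-- `t` left divides `s`. -/
def LDvd {M : Type*} [Monoid M] (t s : M) : Prop := s = t ∨ ∃ u, s = t * u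

/-- The set of elements of `M(X,r)` that are left divisible by at least `i` distinct
generators. -/
def MsetGE (r : X × X → X × X) (i : ℕ) : Set (SM r) :=
  {m | ∃ Y : Finset X, i ≤ Y.card ∧ ∀ x ∈ Y, LDvd (gen r x) m}

/-- The set `M_{YZ}` for subsets `Y, Z` of `X` (of the same cardinality). -/
def MYZ {r : X × X → X × X} (h : IsYB r) (Y Z : Finset X) : Set (SM r) :=
  {m | m ∉ MsetGE r (Y.card + 1) ∧ (∀ x ∈ Y, LDvd (gen r x) m) ∧
    lam h m '' (Z : Set X) = (Y : Set X)}

/-- The set `M_{XX}` of elements left divisible by all generators. -/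
def MXX (r : X × X → X × X) : Set (SM r) := {m | ∀ x : X, LDvd (gen r x) m}

/-- The set `A_{YY}` inside the left derived structure monoid. -/
def AYY (r : X × X → X × X) (Y : Finset X) : Set (SM (dmap r)) :=
  {a | a ∉ MsetGE (dmap r) (Y.card + 1) ∧ ∀ y ∈ Y, LDvd (gen (dmap r) y) a}

/-- A subset of a magma is cancellative (as a semigroup). -/
def IsCancellativeSet {M : Type*} [Mul M] (S : Set M) : Prop :=
  (∀ a ∈ S, ∀ b ∈ S, ∀ c ∈ S, a * c = b * c → a = b) ∧
  (∀ a ∈ S, ∀ b ∈ S, ∀ c ∈ S, c * a = c * b → a = b)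

/-- A nonempty multiplicatively closed subset, i.e. a nonempty subsemigroup. -/
def IsNonemptySubsemigroup {M : Type*} [Mul M] (S : Set M) : Prop :=
  S.Nonempty ∧ ∀ a ∈ S, ∀ b ∈ S, a * b ∈ S

/-- A cancellative magma/monoid. -/
def Cancellative (M : Type*) [Mul M] : Prop :=
  (∀ a b c : M, a * b = a * c → b = c) ∧ (∀ a b c : M, b * a = c * a → b = c)

def IsRightIdealM {M : Type*} [Monoid M] (I : Set M) : Prop :=
  I.Nonempty ∧ ∀ a ∈ I, ∀ s : M, a * s ∈ I

def IsLeftIdealM {M : Type*} [Monoid M] (I : Set M) : Prop :=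
  I.Nonempty ∧ ∀ a ∈ I, ∀ s : M, s * a ∈ I

/-- Ascending chain condition on right ideals of a monoid. -/
def ACCRight (M : Type*) [Monoid M] : Prop :=
  ∀ f : ℕ → Set M, (∀ n, IsRightIdealM (f n)) → Monotone f → ∃ n, ∀ m, n ≤ m → f m = f n

/-- Ascending chain condition on left ideals of a monoid. -/
def ACCLeft (M : Type*) [Monoid M] : Prop :=
  ∀ f : ℕ → Set M, (∀ n, IsLeftIdealM (f n)) → Monotone f → ∃ n, ∀ m, n ≤ m → f m = f n

/-- Left Noetherian ring: ascending chain condition on left ideals. -/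
abbrev LeftNoetherian (R : Type*) [Ring R] : Prop := IsNoetherianRing R

/-- Right Noetherian ring: ascending chain condition on right ideals, i.e. the opposite
ring is left Noetherian. -/
abbrev RightNoetherian (R : Type*) [Ring R] : Prop := IsNoetherianRing Rᵐᵒᵖ

/-- A prime ring: the product of two nonzero two-sided ideals is nonzero; elementwise,
`a R b = 0` implies `a = 0` or `b = 0`. -/
def IsPrimeRing (R : Type*) [Ring R] : Prop :=
  ∀ a b : R, (∀ x : R, a * x * b = 0) → a = 0 ∨ b = 0

/-- A semiprime ring: no nonzero nilpotent two-sided ideal; elementwise, `a R a = 0`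
implies `a = 0`. -/
def IsSemiprimeRing (R : Type*) [NonUnitalNonAssocSemiring R] : Prop :=
  ∀ a : R, (∀ x : R, a * x * a = 0) → a = 0

/-- `S` is nil modulo the ideal `I`, i.e. the image of `S` in the Rees factor by `I`
is a nil semigroup. -/
def NilModulo {M : Type*} [Monoid M] (S I : Set M) : Prop :=
  ∀ a ∈ S, ∃ k : ℕ, 0 < k ∧ a ^ k ∈ I

/-- The socle of the structure monoid: elements with trivial `λ`-map. -/
def Soc {r : X × X → X × X} (h : IsYB r) : Submonoid (SM r) := MonoidHom.mker (lam h)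

/-- The Gelfand–Kirillov dimension of a `K`-algebra `R`:
`sup` over finitely generated subspaces `V` of `limsup_n log_n (dim_K Vⁿ)`. -/
noncomputable def GKdim (K R : Type*) [Field K] [Ring R] [Algebra K R] : ℝ≥0∞ :=
  ⨆ (V : Submodule K R) (_ : V.FG),
    Filter.limsup
      (fun n : ℕ => ENNReal.ofReal (Real.logb n (Module.finrank K ↥(V ^ n))))
      Filter.atTop

/-- A prime two-sided ideal of a ring. -/
def IsPrimeTwoSided {R : Type*} [Ring R] (P : TwoSidedIdeal R) : Prop :=
  (P : Set R) ≠ Set.univ ∧ ∀ a b : R, (∀ x : R, a * x * b ∈ P) → a ∈ P ∨ b ∈ P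

/-- The classical Krull dimension of a ring: the supremum of lengths of chains of
prime two-sided ideals. -/
noncomputable def clKdim (R : Type*) [Ring R] : WithBot ℕ∞ :=
  Order.krullDim {P : TwoSidedIdeal R // IsPrimeTwoSided P}

/-- The (sub)semigroup `S` has a group of fractions which is abelian-by-finite. -/
def HasAbelianByFiniteGroupOfFractions {M : Type} [Monoid M] (S : Set M) : Prop :=
  ∃ (G : Type) (_ : Group G) (φ : M → G),
    Set.InjOn φ S ∧
    (∀ a ∈ S, ∀ b ∈ S, φ (a * b) = φ a * φ b) ∧
    (∀ g : G, ∃ a ∈ S, ∃ b ∈ S, g = φ a * (φ b)⁻¹) ∧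
    (∀ g : G, ∃ a ∈ S, ∃ b ∈ S, g = (φ a)⁻¹ * φ b) ∧
    ∃ H : Subgroup G, (∀ x y : ↥H, x * y = y * x) ∧ H.FiniteIndex

/-- `R` is a PI-algebra over `K`: it satisfies a nonzero polynomial identity. -/
def IsPIAlgebra (K R : Type*) [CommSemiring K] [Semiring R] [Algebra K R] : Prop :=
  ∃ (n : ℕ) (f : FreeAlgebra K (Fin n)), f ≠ 0 ∧ ∀ φ : FreeAlgebra K (Fin n) →ₐ[K] R, φ f = 0

/-- `λ_x` as an element of the monoid of self-maps of `X`. -/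
def lamEnd (r : X × X → X × X) (x : X) : Function.End X := lmap r x

/-- `σ_x` as an element of the monoid of self-maps of `X`. -/
noncomputable def sigEnd (r : X × X → X × X) (x : X) : Function.End X := sigmaMap r x

/-- A two-sided ideal of a monoid. -/
def IsIdealM {A : Type*} [Monoid A] (I : Set A) : Prop :=
  I.Nonempty ∧ ∀ a ∈ I, ∀ s : A, a * s ∈ I ∧ s * a ∈ I

/-- A prime ideal of a monoid. -/
def IsPrimeIdealM {A : Type*} [Monoid A] (P : Set A) : Prop :=
  IsIdealM P ∧ P ≠ Set.univ ∧ ∀ a b : A, (∀ s : A, a * s * b ∈ P) → a ∈ P ∨ b ∈ P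

/-- The family `𝒵(X,r)` of proper nonempty `σ`-invariant subsets of `X`. -/
def ZFam (r : X × X → X × X) : Set (Set X) :=
  {Z | Z.Nonempty ∧ Z ≠ Set.univ ∧
    ∀ x ∉ Z, (∀ z ∈ Z, sigmaMap r x z ∈ Z) ∧ ∀ y ∉ Z, sigmaMap r x y ∉ Z}

/-- The ideal `P(Z) = ⋃_{z ∈ Z} (z + A)` of the left derived structure monoid. -/
def PZ (r : X × X → X × X) (Z : Set X) : Set (SM (dmap r)) :=
  {a | ∃ z ∈ Z, ∃ b, a = gen (dmap r) z * b}

/-- The monoid `Σ_Z = ⟨σ_x : x ∈ X \ Z⟩` of self-maps of `X`. -/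
noncomputable def SigClosure (r : X × X → X × X) (Z : Set X) : Submonoid (Function.End X) :=
  Submonoid.closure {f : Function.End X | ∃ x ∈ Zᶜ, f = sigmaMap r x}

/-- `t(Z)`: the number of orbits of `X \ Z` under the action of `Σ_Z`. -/
noncomputable def tOrb (r : X × X → X × X) (Z : Set X) : ℕ :=
  Nat.card (Quot fun a b : ↥(Zᶜ) =>
    ∃ s ∈ SigClosure r Z, ∃ t ∈ SigClosure r Z, s (a : X) = t (b : X))

/-- `z_κ = v·x_{κ(1)} + ⋯ + v·x_{κ(n)}` in the left derived structure monoid. -/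
noncomputable def zkappa (r : X × X → X × X) {n : ℕ} (en : Fin n ≃ X) (v : ℕ)
    (κ : Equiv.Perm (Fin n)) : SM (dmap r) :=
  ((List.finRange n).map fun i => gen (dmap r) (en (κ i)) ^ v).prod

/-- `z_id = v·x_1 + ⋯ + v·x_n` in the left derived structure monoid. -/
noncomputable def zid (r : X × X → X × X) {n : ℕ} (en : Fin n ≃ X) (v : ℕ) : SM (dmap r) :=
  zkappa r en v 1

/-- The diagonal map of `M(X,r)` with values in `A(X,r)`: `q(m) = λ_m⁻¹(π(m))`, expressed
through a bijective `1`-cocycle `π` and the extension `Λ` of `λ` to automorphisms of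
`A(X,r)`. -/
noncomputable def qelt (r : X × X → X × X) (π : SM r ≃ SM (dmap r))
    (Λ : SM r →* MulAut (SM (dmap r))) (m : SM r) : SM (dmap r) :=
  (Λ m)⁻¹ (π m)

/-- The subset `Ω_λ = {(z,λ_z) ∘ (e·q(z_id), id)⁻¹ : z ∈ O_λ(e·q(z_id))}` of the structure
group, where `O_λ(e·q(z_id))` is the orbit of `e·q(z_id)` under `⟨λ_x : x ∈ X⟩`. -/
noncomputable def OmegaSet (r : X × X → X × X) (π : SM r ≃ SM (dmap r))
    (Λ : SM r →* MulAut (SM (dmap r))) {n : ℕ} (en : Fin n ≃ X) (v e : ℕ) : Set (SG r) :=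
  {g | ∃ a : SM r,
    g = toSG r (π.symm (Λ a (qelt r π Λ (π.symm (zid r en v)) ^ e))) *
        (toSG r (π.symm (qelt r π Λ (π.symm (zid r en v)) ^ e)))⁻¹}

/-- The image `X̄` of `X` in the quotient of the left derived structure monoid by a
congruence `c`. -/
def XBar (r : X × X → X × X) (c : Con (SM (dmap r))) : Set c.Quotient :=
  Set.range fun x : X => c.mk' (gen (dmap r) x)

/-- A regular element of a ring (neither a left nor a right zero-divisor). -/
def IsRegularElem {R : Type*} [Ring R] (s : R) : Prop :=
  (∀ x, s * x = 0 → x = 0) ∧ (∀ x, x * s = 0 → x = 0)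

/-- `j : R →+* Q` realizes `Q` as the classical (right) ring of quotients of `R`. -/
def IsClassicalRightQuotientRing {R Q : Type*} [Ring R] [Ring Q] (j : R →+* Q) : Prop :=
  Function.Injective j ∧ (∀ s : R, IsRegularElem s → IsUnit (j s)) ∧
  ∀ q : Q, ∃ a s : R, IsRegularElem s ∧ q * j s = j a

/-! ### Combinatorics of the left derived structure monoid -/

section Derived

variable {X : Type} (r : X × X → X × X)

/-- Word map into the left derived structure monoid. -/
noncomputable def WA (l : List X) : SM (dmap r) :=
  (structCon (dmap r)).mk' (FreeMonoid.ofList l)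

@[simp] theorem WA_nil : WA r ([] : List X) = 1 := rfl

theorem WA_append (l₁ l₂ : List X) : WA r (l₁ ++ l₂) = WA r l₁ * WA r l₂ := by
  simp [WA, FreeMonoid.ofList_append, map_mul]

theorem WA_cons (x : X) (l : List X) : WA r (x :: l) = gen (dmap r) x * WA r l := by
  exact WA_append r [x] l

@[simp] theorem WA_singleton (x : X) : WA r [x] = gen (dmap r) x := rfl

/-- The defining relation of the derived monoid: `x ⬝ y = y ⬝ σ_y(x)`. -/
theorem WA_rel (x y : X) : WA r [x, y] = WA r [y, sigmaMap r y x] := by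
  have h : structRel (dmap r) (FreeMonoid.of x * FreeMonoid.of y)
      (FreeMonoid.of y * FreeMonoid.of (sigmaMap r y x)) := ⟨x, y, rfl, rfl⟩
  have h2 : (structCon (dmap r)) (FreeMonoid.of x * FreeMonoid.of y)
      (FreeMonoid.of y * FreeMonoid.of (sigmaMap r y x)) := ConGen.Rel.of _ _ h
  simpa [WA, FreeMonoid.ofList_cons, FreeMonoid.ofList_nil] using (Con.eq _).2 h2

end Derived

section Derived2

variable {X : Type} (r : X × X → X × X)

/-- The cumulative twist `F(u)(x) = σ_{u_k} ∘ ⋯ ∘ σ_{u_1} (x)`. -/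
noncomputable def twA (u : List X) (x : X) : X := u.foldl (fun a y => sigmaMap r y a) x

@[simp] theorem twA_nil (x : X) : twA r [] x = x := rfl

@[simp] theorem twA_cons (y : X) (u : List X) (x : X) :
    twA r (y :: u) x = twA r u (sigmaMap r y x) := rfl

/-- The relation in generator form. -/
theorem WA_rel' (x y : X) : gen (dmap r) x * gen (dmap r) y =
    gen (dmap r) y * gen (dmap r) (sigmaMap r y x) := by
  have h := WA_rel r x y
  rw [show WA r [x, y] = gen (dmap r) x * gen (dmap r) y from by
        rw [WA_cons, WA_singleton]] at h
  rw [show WA r [y, sigmaMap r y x] = gen (dmap r) y * gen (dmap r) (sigmaMap r y x) from by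
        rw [WA_cons, WA_singleton]] at h
  exact h

/-- Pushing the final letter to the front. -/
theorem WA_push (l : List X) (y : X) :
    WA r (l ++ [y]) = gen (dmap r) y * WA r (l.map (fun x => sigmaMap r y x)) := by
  induction l with
  | nil => simp [WA_cons]
  | cons a l ih =>
      rw [List.cons_append, WA_cons, ih, List.map_cons, WA_cons,
        ← mul_assoc, WA_rel', mul_assoc]

/-- Pushing a letter through a word to the right, twisting it. -/
theorem WA_pushThrough (u : List X) (x : X) :
    WA r (x :: u) = WA r u * gen (dmap r) (twA r u x) := by
  induction u generalizing x with
  | nil => simp [WA_cons]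
  | cons y u ih =>
      rw [WA_cons, WA_cons, ← mul_assoc, WA_rel', mul_assoc, twA_cons]
      rw [show gen (dmap r) (sigmaMap r y x) * WA r u = WA r (sigmaMap r y x :: u) from
        (WA_cons r _ u).symm, ih]
      exact (mul_assoc _ _ _).symm

/-- Subwords are left divisors in the derived monoid. -/
theorem WA_sublist_ldvd {l₁ l₂ : List X} (h : l₁.Sublist l₂) :
    ∃ c, WA r l₂ = WA r l₁ * c := by
  induction h with
  | slnil => exact ⟨1, by simp⟩
  | @cons l₁ l₂ a h ih =>
      obtain ⟨c, hc⟩ := ih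
      refine ⟨c * gen (dmap r) (twA r l₂ a), ?_⟩
      rw [WA_pushThrough, hc]; group
  | @cons_cons l₁ l₂ a h ih =>
      obtain ⟨c, hc⟩ := ih
      exact ⟨c, by rw [WA_cons, hc, WA_cons]; group⟩

/-- Good words: each letter is in the image of the twist of its prefix. -/
def GoodA (p : List X) : Prop := ∀ u z v, p = u ++ z :: v → ∃ x₀, twA r u x₀ = z

/-- Existence of good representatives (push-to-front normal forms). -/
theorem WA_exists_good_aux (l : List X) : ∀ g : X → X, ∃ p : List X,
    WA r p = WA r (l.map g) ∧ ∀ u z v, p = u ++ z :: v → ∃ x₀, twA r u (g x₀) = z := by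
  induction l using List.reverseRecOn with
  | nil => exact fun g => ⟨[], by simp, by rintro u z v h; exact absurd h (by simp)⟩
  | append_singleton l y ih =>
      intro g
      obtain ⟨p', hp'1, hp'2⟩ := ih (fun t => sigmaMap r (g y) (g t))
      refine ⟨g y :: p', ?_, ?_⟩
      · rw [List.map_append, List.map_singleton, WA_push, WA_cons, hp'1, List.map_map]
        rfl
      · rintro u z v h
        match u, h with
        | [], h =>
            obtain ⟨rfl, -⟩ : g y = z ∧ p' = v := by
              simpa using h
            exact ⟨y, by simp⟩
        | w :: u', h =>
            obtain ⟨rfl, hp⟩ : g y = w ∧ p' = u' ++ z :: v := by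
              simpa using h
            obtain ⟨x₀, hx₀⟩ := hp'2 u' z v hp
            exact ⟨x₀, by simpa using hx₀⟩

theorem WA_exists_good (l : List X) :
    ∃ p : List X, WA r p = WA r l ∧ GoodA r p := by
  obtain ⟨p, h1, h2⟩ := WA_exists_good_aux r l id
  exact ⟨p, by simpa using h1, fun u z v h => h2 u z v h⟩

/-- Deleting a letter which is in the image of the twist of its prefix. -/
theorem WA_del_one (u v : List X) (z x₀ : X) (h : twA r u x₀ = z) :
    WA r (u ++ z :: v) = gen (dmap r) x₀ * WA r (u ++ v) := by
  have h1 : gen (dmap r) x₀ * WA r u = WA r u * gen (dmap r) z := by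
    rw [← h, ← WA_pushThrough, WA_cons]
  rw [WA_append, WA_cons, WA_append, ← mul_assoc, ← mul_assoc, ← h1, mul_assoc]

theorem GoodA_prefix {p : List X} {z : X} (h : GoodA r (p ++ [z])) : GoodA r p := by
  rintro u z' v rfl
  exact h u z' (v ++ [z]) (by simp)

/-- Sublists of good words are right divisors. -/
theorem WA_sublist_rdvd : ∀ p : List X, GoodA r p → ∀ l' : List X, l'.Sublist p →
    ∃ c, WA r p = c * WA r l' := by
  intro p
  induction p using List.reverseRecOn with
  | nil =>
      intro _ l' hl'
      rw [List.sublist_nil.mp hl']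
      exact ⟨1, by simp⟩
  | append_singleton p₀ z ih =>
      intro hgood l' hl'
      rw [List.sublist_append_iff] at hl'
      obtain ⟨l₁, l₂, rfl, h₁, h₂⟩ := hl'
      rcases List.sublist_singleton.mp h₂ with rfl | rfl
      · -- the final letter z is deleted
        obtain ⟨x₀, hx₀⟩ := hgood p₀ z [] rfl
        obtain ⟨c, hc⟩ := ih (GoodA_prefix r hgood) l₁ (by simpa using h₁)
        refine ⟨gen (dmap r) x₀ * c, ?_⟩
        have := WA_del_one r p₀ [] z x₀ hx₀
        rw [show p₀ ++ [] = p₀ from by simp] at this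
        rw [this, hc]
        simp [mul_assoc]
      · -- the final letter z is kept
        obtain ⟨c, hc⟩ := ih (GoodA_prefix r hgood) l₁ h₁
        refine ⟨c, ?_⟩
        rw [WA_append, WA_append, hc]
        group

end Derived2

section ACCGeneral

/-- Higman's lemma for finite alphabets. -/
theorem higman_fin {Y : Type} [Finite Y] (w : ℕ → List Y) :
    ∃ i j, i < j ∧ (w i).Sublist (w j) := by
  have h : (Set.univ : Set Y).PartiallyWellOrderedOn (· = ·) :=
    Set.Finite.partiallyWellOrderedOn Set.finite_univ
  have h2 := Set.PartiallyWellOrderedOn.partiallyWellOrderedOn_sublistForall₂ (· = ·) h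
  obtain ⟨i, j, hij, hr⟩ := h2.exists_lt (f := w) (by simp)
  refine ⟨i, j, hij, ?_⟩
  rw [List.sublistForall₂_iff] at hr
  obtain ⟨l, hl1, hl2⟩ := hr
  obtain rfl : w i = l := by
    have := List.forall₂_eq_eq_eq (α := Y) ▸ hl1
    exact this
  exact hl2

theorem accRight_of_wqo {M : Type*} [Monoid M]
    (H : ∀ g : ℕ → M, ∃ i j, i < j ∧ ∃ c, g j = g i * c) : ACCRight M := by
  intro f hf hmono
  by_contra hcon
  push_neg at hcon
  choose nxt hn1 hn2 using hcon
  set N : ℕ → ℕ := fun k => Nat.rec 0 (fun _ prev => nxt prev) k with hN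
  have hNstep : ∀ k, N (k + 1) = nxt (N k) := fun k => rfl
  have hNle : ∀ k, N k ≤ N (k + 1) := fun k => by rw [hNstep]; exact hn1 (N k)
  have hNmono : Monotone N := monotone_nat_of_le_succ hNle
  have hssub : ∀ k, ∃ a, a ∈ f (N (k + 1)) ∧ a ∉ f (N k) := by
    intro k
    have hsub : f (N k) ⊆ f (N (k + 1)) := hmono (hNle k)
    have hne : f (N (k + 1)) ≠ f (N k) := by rw [hNstep]; exact hn2 (N k)
    by_contra hc
    push_neg at hc
    exact hne (Set.Subset.antisymm (fun a ha => by
      by_contra hna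
      exact hna (hc a ha)) hsub)
  choose a ha1 ha2 using hssub
  obtain ⟨i, j, hij, c, hc⟩ := H a
  have h1 : a i ∈ f (N j) := hmono (hNmono (Nat.succ_le_of_lt hij)) (ha1 i)
  have h2 : a i * c ∈ f (N j) := (hf (N j)).2 _ h1 c
  rw [← hc] at h2
  exact ha2 j h2

theorem accLeft_of_wqo {M : Type*} [Monoid M]
    (H : ∀ g : ℕ → M, ∃ i j, i < j ∧ ∃ c, g j = c * g i) : ACCLeft M := by
  intro f hf hmono
  by_contra hcon
  push_neg at hcon
  choose nxt hn1 hn2 using hcon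
  set N : ℕ → ℕ := fun k => Nat.rec 0 (fun _ prev => nxt prev) k with hN
  have hNstep : ∀ k, N (k + 1) = nxt (N k) := fun k => rfl
  have hNle : ∀ k, N k ≤ N (k + 1) := fun k => by rw [hNstep]; exact hn1 (N k)
  have hNmono : Monotone N := monotone_nat_of_le_succ hNle
  have hssub : ∀ k, ∃ a, a ∈ f (N (k + 1)) ∧ a ∉ f (N k) := by
    intro k
    have hsub : f (N k) ⊆ f (N (k + 1)) := hmono (hNle k)
    have hne : f (N (k + 1)) ≠ f (N k) := by rw [hNstep]; exact hn2 (N k)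
    by_contra hc
    push_neg at hc
    exact hne (Set.Subset.antisymm (fun a ha => by
      by_contra hna
      exact hna (hc a ha)) hsub)
  choose a ha1 ha2 using hssub
  obtain ⟨i, j, hij, c, hc⟩ := H a
  have h1 : a i ∈ f (N j) := hmono (hNmono (Nat.succ_le_of_lt hij)) (ha1 i)
  have h2 : c * a i ∈ f (N j) := (hf (N j)).2 _ h1 c
  rw [← hc] at h2
  exact ha2 j h2

end ACCGeneral

section DerivedACC

variable {X : Type} (r : X × X → X × X)

theorem WA_surjective (a : SM (dmap r)) : ∃ l : List X, WA r l = a := by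
  obtain ⟨w, hw⟩ := Con.mk'_surjective (c := structCon (dmap r)) a
  exact ⟨FreeMonoid.toList w, by simpa [WA] using hw⟩

theorem wqo_ldvd_A [Fintype X] (g : ℕ → SM (dmap r)) :
    ∃ i j, i < j ∧ ∃ c, g j = g i * c := by
  choose l hl using fun n => WA_surjective r (g n)
  obtain ⟨i, j, hij, hsub⟩ := higman_fin l
  obtain ⟨c, hc⟩ := WA_sublist_ldvd r hsub
  exact ⟨i, j, hij, c, by rw [← hl i, ← hl j, hc]⟩

theorem wqo_rdvd_A [Fintype X] (g : ℕ → SM (dmap r)) :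
    ∃ i j, i < j ∧ ∃ c, g j = c * g i := by
  have hrep : ∀ n, ∃ p : List X, WA r p = g n ∧ GoodA r p := by
    intro n
    obtain ⟨l, hl⟩ := WA_surjective r (g n)
    obtain ⟨p, hp1, hp2⟩ := WA_exists_good r l
    exact ⟨p, by rw [hp1, hl], hp2⟩
  choose p hp hgood using hrep
  obtain ⟨i, j, hij, hsub⟩ := higman_fin p
  obtain ⟨c, hc⟩ := WA_sublist_rdvd r (p j) (hgood j) (p i) hsub
  exact ⟨i, j, hij, c, by rw [← hp i, ← hp j, hc]⟩

theorem accRight_A [Fintype X] : ACCRight (SM (dmap r)) :=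
  accRight_of_wqo (wqo_ldvd_A r)

theorem accLeft_A [Fintype X] : ACCLeft (SM (dmap r)) :=
  accLeft_of_wqo (wqo_rdvd_A r)

end DerivedACC

section Identities

variable {X : Type} {r : X × X → X × X}

theorem pinv_right {f : X → X} (hf : Function.Bijective f) (y : X) : f (pinv f y) = y := by
  unfold pinv
  have h : ∃ x, f x = y := hf.2 y
  rw [dif_pos h]
  exact h.choose_spec

theorem pinv_left {f : X → X} (hf : Function.Bijective f) (x : X) : pinv f (f x) = x :=
  hf.1 (pinv_right hf (f x))

/-- The middle component of the Yang–Baxter equation. -/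
theorem rmap_lmap (h : IsYB r) (x y z : X) :
    rmap r (lmap r (rmap r y x) z) (lmap r x y) =
      lmap r (rmap r (lmap r y z) x) (rmap r z y) :=
  congrArg (fun p : X × X × X => p.2.1) (congrFun h (x, y, z))

/-- `σ_{λ_x y} (x) = λ_{λ_x y} (ρ_y x)`. -/
theorem sigma_lmap (hlnd : LeftNonDeg r) (x y : X) :
    sigmaMap r (lmap r x y) x = lmap r (lmap r x y) (rmap r y x) := by
  unfold sigmaMap
  rw [pinv_left (hlnd x)]

/-- The `λ`-maps normalize the `σ`-maps: `λ_w ∘ σ_z = σ_{λ_w z} ∘ λ_w`. -/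
theorem lmap_sigma (h : IsYB r) (hlnd : LeftNonDeg r) (w z y : X) :
    lmap r w (sigmaMap r z y) = sigmaMap r (lmap r w z) (lmap r w y) := by
  set u := pinv (lmap r y) z with hu
  have hyu : lmap r y u = z := pinv_right (hlnd y) z
  have hσ : sigmaMap r z y = lmap r z (rmap r u y) := rfl
  have step1 : lmap r w (lmap r z (rmap r u y)) =
      lmap r (lmap r w z) (lmap r (rmap r z w) (rmap r u y)) := by
    rw [lmap_lmap h w z (rmap r u y)]
  have step2 : lmap r (rmap r z w) (rmap r u y) =
      rmap r (lmap r (rmap r y w) u) (lmap r w y) := by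
    have := rmap_lmap h w y u
    rw [hyu] at this
    exact this.symm
  have step3 : pinv (lmap r (lmap r w y)) (lmap r w z) = lmap r (rmap r y w) u := by
    have hkey : lmap r (lmap r w y) (lmap r (rmap r y w) u) = lmap r w z := by
      rw [lmap_lmap h w y u, hyu]
    rw [← hkey, pinv_left (hlnd (lmap r w y))]
  have hσ' : sigmaMap r (lmap r w z) (lmap r w y) =
      lmap r (lmap r w z) (rmap r (pinv (lmap r (lmap r w y)) (lmap r w z)) (lmap r w y)) := rfl
  rw [hσ, step1, step2, hσ', step3]

/-- Compatibility of a self-map with the `σ`-maps. -/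
def CompatI (r : X × X → X × X) (f : X → X) : Prop :=
  ∀ z y, f (sigmaMap r z y) = sigmaMap r (f z) (f y)

theorem compatI_id : CompatI r id := fun _ _ => rfl

theorem compatI_comp {f g : X → X} (hf : CompatI r f) (hg : CompatI r g) :
    CompatI r (f ∘ g) := fun z y => by
  simp only [Function.comp_apply, hg z y, hf (g z) (g y)]

theorem compatI_lmap (h : IsYB r) (hlnd : LeftNonDeg r) (x : X) : CompatI r (lmap r x) :=
  fun z y => lmap_sigma h hlnd x z y

theorem compatI_pinv {f : X → X} (hf : Function.Bijective f) (hc : CompatI r f) :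
    CompatI r (pinv f) := by
  intro z y
  have h1 : f (pinv f (sigmaMap r z y)) = sigmaMap r z y := pinv_right hf _
  have h2 : f (sigmaMap r (pinv f z) (pinv f y)) = sigmaMap r z y := by
    rw [hc, pinv_right hf, pinv_right hf]
  exact hf.1 (h1.trans h2.symm)

theorem compatI_pinv_lmap (h : IsYB r) (hlnd : LeftNonDeg r) (x : X) :
    CompatI r (pinv (lmap r x)) :=
  compatI_pinv (hlnd x) (compatI_lmap h hlnd x)

end Identities

section Cocycle

variable {X : Type} (r : X × X → X × X)

/-- Word map into the structure monoid. -/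
noncomputable def WM (l : List X) : SM r := (structCon r).mk' (FreeMonoid.ofList l)

@[simp] theorem WM_nil : WM r ([] : List X) = 1 := rfl

theorem WM_append (l₁ l₂ : List X) : WM r (l₁ ++ l₂) = WM r l₁ * WM r l₂ := by
  simp [WM, FreeMonoid.ofList_append, map_mul]

theorem WM_cons (x : X) (l : List X) : WM r (x :: l) = gen r x * WM r l := by
  exact WM_append r [x] l

@[simp] theorem WM_singleton (x : X) : WM r [x] = gen r x := rfl

theorem WM_rel (x y : X) : WM r [x, y] = WM r [lmap r x y, rmap r y x] := by
  have h2 : (structCon r) (FreeMonoid.of x * FreeMonoid.of y)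
      (FreeMonoid.of (lmap r x y) * FreeMonoid.of (rmap r y x)) :=
    ConGen.Rel.of _ _ ⟨x, y, rfl, rfl⟩
  simpa [WM, FreeMonoid.ofList_cons, FreeMonoid.ofList_nil] using (Con.eq _).2 h2

theorem WM_surjective (a : SM r) : ∃ l : List X, WM r l = a := by
  obtain ⟨w, hw⟩ := Con.mk'_surjective (c := structCon r) a
  exact ⟨FreeMonoid.toList w, by simpa [WM] using hw⟩

/-- The endomorphism of the derived structure monoid induced by a compatible self-map. -/
noncomputable def mapA (f : X → X) (hf : CompatI r f) : SM (dmap r) →* SM (dmap r) :=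
  Con.lift _ ((structCon (dmap r)).mk'.comp (FreeMonoid.map f)) (by
    refine Con.conGen_le.mpr ?_
    rintro w₁ w₂ ⟨x, y, rfl, rfl⟩
    refine (Con.ker_rel _).mpr ?_
    simp only [MonoidHom.comp_apply, map_mul, FreeMonoid.map_of]
    show gen (dmap r) (f x) * gen (dmap r) (f y) =
      gen (dmap r) (f (lmap (dmap r) x y)) * gen (dmap r) (f (rmap (dmap r) y x))
    show gen (dmap r) (f x) * gen (dmap r) (f y) =
      gen (dmap r) (f y) * gen (dmap r) (f (sigmaMap r y x))
    rw [hf y x]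
    exact WA_rel' r (f x) (f y))

theorem mapA_WA (f : X → X) (hf : CompatI r f) (l : List X) :
    mapA r f hf (WA r l) = WA r (l.map f) := by
  show (mapA r f hf) ((structCon (dmap r)).mk' (FreeMonoid.ofList l)) = _
  rw [show mapA r f hf ((structCon (dmap r)).mk' (FreeMonoid.ofList l)) =
    (structCon (dmap r)).mk' (FreeMonoid.map f (FreeMonoid.ofList l)) from rfl]
  rw [← FreeMonoid.ofList_map]
  rfl

theorem mapA_comp (f g : X → X) (hf : CompatI r f) (hg : CompatI r g) (a : SM (dmap r)) :
    mapA r f hf (mapA r g hg a) = mapA r (f ∘ g) (compatI_comp hf hg) a := by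
  obtain ⟨l, rfl⟩ := WA_surjective r a
  rw [mapA_WA, mapA_WA, mapA_WA, List.map_map]

theorem mapA_id (hf : CompatI r id) (a : SM (dmap r)) : mapA r id hf a = a := by
  obtain ⟨l, rfl⟩ := WA_surjective r a
  rw [mapA_WA, List.map_id]

theorem mapA_congr {f g : X → X} (hf : CompatI r f) (hg : CompatI r g) (hfg : f = g)
    (a : SM (dmap r)) : mapA r f hf a = mapA r g hg a := by
  subst hfg; rfl

/-- The `λ`-twisted word transform realizing the `1`-cocycle. -/
def PhiW : List X → List X
  | [] => []
  | x :: w => x :: (PhiW w).map (lmap r x)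

/-- The inverse word transform. -/
noncomputable def PsiW : List X → List X
  | [] => []
  | x :: w => x :: PsiW (w.map (pinv (lmap r x)))
termination_by l => l.length
decreasing_by simp

@[simp] theorem PhiW_nil : PhiW r [] = [] := rfl
@[simp] theorem PsiW_nil : PsiW r [] = [] := by rw [PsiW]

theorem PhiW_cons (x : X) (w : List X) : PhiW r (x :: w) = x :: (PhiW r w).map (lmap r x) := rfl

theorem PsiW_cons (x : X) (w : List X) :
    PsiW r (x :: w) = x :: PsiW r (w.map (pinv (lmap r x))) := by
  rw [PsiW]

variable {r}

theorem PsiW_PhiW (hlnd : LeftNonDeg r) : ∀ l : List X, PsiW r (PhiW r l) = l := by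
  intro l
  induction l with
  | nil => simp
  | cons x w ih =>
      rw [PhiW_cons, PsiW_cons, List.map_map,
        show pinv (lmap r x) ∘ lmap r x = id from funext (pinv_left (hlnd x)), List.map_id, ih]

theorem PhiW_PsiW (hlnd : LeftNonDeg r) : ∀ l : List X, PhiW r (PsiW r l) = l := by
  have key : ∀ (n : ℕ) (l : List X), l.length ≤ n → PhiW r (PsiW r l) = l := by
    intro n
    induction n with
    | zero =>
        intro l hl
        rw [List.length_eq_zero_iff.mp (Nat.le_zero.mp hl)]
        simp
    | succ n ih =>
        intro l hl
        match l with
        | [] => simp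
        | x :: w =>
            have hlen : (w.map (pinv (lmap r x))).length ≤ n := by
              simp only [List.length_map]
              exact Nat.succ_le_succ_iff.mp (by simpa using hl)
            rw [PsiW_cons, PhiW_cons, ih (w.map (pinv (lmap r x))) hlen, List.map_map,
              show lmap r x ∘ pinv (lmap r x) = id from funext (pinv_right (hlnd x)), List.map_id]
  exact fun l => key l.length l le_rfl

end Cocycle

section Pi

variable {X : Type} (r : X × X → X × X)

/-- The composite of the `λ`-maps along a word. -/
def lamW : List X → X → X
  | [] => id
  | x :: u => lmap r x ∘ lamW u

@[simp] theorem lamW_nil : lamW r [] = id := rfl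
@[simp] theorem lamW_cons (x : X) (u : List X) : lamW r (x :: u) = lmap r x ∘ lamW r u := rfl

theorem lamW_append (u v : List X) : lamW r (u ++ v) = lamW r u ∘ lamW r v := by
  induction u with
  | nil => simp
  | cons x u ih => simp [ih, Function.comp_assoc]

theorem lamW_compat (h : IsYB r) (hlnd : LeftNonDeg r) (u : List X) : CompatI r (lamW r u) := by
  induction u with
  | nil => exact compatI_id
  | cons x u ih => exact compatI_comp (compatI_lmap h hlnd x) ih

theorem lamW_bij (hlnd : LeftNonDeg r) (u : List X) : Function.Bijective (lamW r u) := by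
  induction u with
  | nil => exact Function.bijective_id
  | cons x u ih => exact (hlnd x).comp ih

theorem PhiW_append (u v : List X) :
    PhiW r (u ++ v) = PhiW r u ++ (PhiW r v).map (lamW r u) := by
  induction u with
  | nil => simp
  | cons x u ih =>
      rw [List.cons_append, PhiW_cons, ih, List.map_append, PhiW_cons, List.map_map, lamW_cons,
        List.cons_append]

theorem pi_invariant (h : IsYB r) (hlnd : LeftNonDeg r) :
    ∀ w₁ w₂ : FreeMonoid X, structCon r w₁ w₂ →
      WA r (PhiW r (FreeMonoid.toList w₁)) = WA r (PhiW r (FreeMonoid.toList w₂)) ∧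
      lamW r (FreeMonoid.toList w₁) = lamW r (FreeMonoid.toList w₂) := by
  intro w₁ w₂ hc
  induction hc with
  | of u v huv =>
      obtain ⟨x, y, rfl, rfl⟩ := huv
      constructor
      · show WA r (PhiW r [x, y]) = WA r (PhiW r [lmap r x y, rmap r y x])
        show WA r [x, lmap r x y] =
          WA r [lmap r x y, lmap r (lmap r x y) (rmap r y x)]
        have e1 : WA r [x, lmap r x y] = gen (dmap r) x * gen (dmap r) (lmap r x y) := by
          rw [WA_cons, WA_singleton]
        have e2 : WA r [lmap r x y, lmap r (lmap r x y) (rmap r y x)] =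
            gen (dmap r) (lmap r x y) * gen (dmap r) (lmap r (lmap r x y) (rmap r y x)) := by
          rw [WA_cons, WA_singleton]
        rw [e1, e2, WA_rel', sigma_lmap hlnd x y]
      · show lamW r [x, y] = lamW r [lmap r x y, rmap r y x]
        funext t
        simp only [lamW_cons, lamW_nil, Function.comp_apply, id_eq]
        exact (lmap_lmap h x y t).symm
  | refl w => exact ⟨rfl, rfl⟩
  | symm _ ih => exact ⟨ih.1.symm, ih.2.symm⟩
  | trans _ _ ih1 ih2 => exact ⟨ih1.1.trans ih2.1, ih1.2.trans ih2.2⟩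
  | mul _ _ ih1 ih2 =>
      rename_i a b c d _ _
      constructor
      · show WA r (PhiW r (FreeMonoid.toList a ++ FreeMonoid.toList c)) =
          WA r (PhiW r (FreeMonoid.toList b ++ FreeMonoid.toList d))
        rw [PhiW_append, PhiW_append, WA_append, WA_append,
          ← mapA_WA r _ (lamW_compat r h hlnd _), ← mapA_WA r _ (lamW_compat r h hlnd _),
          ih1.1, ih2.1, mapA_congr r _ (lamW_compat r h hlnd (FreeMonoid.toList b)) ih1.2]
      · show lamW r (FreeMonoid.toList a ++ FreeMonoid.toList c) =
          lamW r (FreeMonoid.toList b ++ FreeMonoid.toList d)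
        rw [lamW_append, lamW_append, ih1.2, ih2.2]

/-- The bijective `1`-cocycle `M(X,r) → A(X,r)`. -/
noncomputable def piM (h : IsYB r) (hlnd : LeftNonDeg r) : SM r → SM (dmap r) :=
  fun m => Con.liftOn m (fun w => WA r (PhiW r (FreeMonoid.toList w)))
    (fun a b hc => (pi_invariant r h hlnd a b hc).1)

/-- The `λ`-map of an element of the structure monoid, as a self-map of `X`. -/
noncomputable def lamM (h : IsYB r) (hlnd : LeftNonDeg r) : SM r → (X → X) :=
  fun m => Con.liftOn m (fun w => lamW r (FreeMonoid.toList w))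
    (fun a b hc => (pi_invariant r h hlnd a b hc).2)

theorem piM_WM (h : IsYB r) (hlnd : LeftNonDeg r) (l : List X) :
    piM r h hlnd (WM r l) = WA r (PhiW r l) := rfl

theorem lamM_WM (h : IsYB r) (hlnd : LeftNonDeg r) (l : List X) :
    lamM r h hlnd (WM r l) = lamW r l := rfl

theorem lamM_compat (h : IsYB r) (hlnd : LeftNonDeg r) (m : SM r) :
    CompatI r (lamM r h hlnd m) := by
  obtain ⟨l, rfl⟩ := WM_surjective r m
  rw [lamM_WM]
  exact lamW_compat r h hlnd l

theorem lamM_bij (h : IsYB r) (hlnd : LeftNonDeg r) (m : SM r) :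
    Function.Bijective (lamM r h hlnd m) := by
  obtain ⟨l, rfl⟩ := WM_surjective r m
  rw [lamM_WM]
  exact lamW_bij r hlnd l

/-- The `1`-cocycle identity. -/
theorem piM_mul (h : IsYB r) (hlnd : LeftNonDeg r) (m m' : SM r) :
    piM r h hlnd (m * m') =
      piM r h hlnd m * mapA r (lamM r h hlnd m) (lamM_compat r h hlnd m) (piM r h hlnd m') := by
  obtain ⟨u, rfl⟩ := WM_surjective r m
  obtain ⟨v, rfl⟩ := WM_surjective r m'
  rw [← WM_append, piM_WM, piM_WM, piM_WM, PhiW_append, WA_append,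
    ← mapA_WA r _ (lamW_compat r h hlnd u)]
  rfl

end Pi

section Psi

variable {X : Type} (r : X × X → X × X)

/-- The composite of inverse `λ`-maps realizing the inverse cocycle twist. -/
noncomputable def pLam : List X → X → X
  | [] => id
  | x :: u => pLam (u.map (pinv (lmap r x))) ∘ pinv (lmap r x)
termination_by l => l.length
decreasing_by simp

@[simp] theorem pLam_nil : pLam r [] = id := by rw [pLam]

theorem pLam_cons (x : X) (u : List X) :
    pLam r (x :: u) = pLam r (u.map (pinv (lmap r x))) ∘ pinv (lmap r x) := by
  rw [pLam]

theorem pLam_compat (h : IsYB r) (hlnd : LeftNonDeg r) (u : List X) : CompatI r (pLam r u) := by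
  have key : ∀ (n : ℕ) (u : List X), u.length ≤ n → CompatI r (pLam r u) := by
    intro n
    induction n with
    | zero =>
        intro u hu
        rw [List.length_eq_zero_iff.mp (Nat.le_zero.mp hu), pLam_nil]
        exact compatI_id
    | succ n ih =>
        intro u hu
        match u with
        | [] => rw [pLam_nil]; exact compatI_id
        | x :: u' =>
            rw [pLam_cons]
            have hlen : (u'.map (pinv (lmap r x))).length ≤ n := by
              simp only [List.length_map]
              exact Nat.succ_le_succ_iff.mp (by simpa using hu)
            exact compatI_comp (ih _ hlen) (compatI_pinv_lmap h hlnd x)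
  exact key u.length u le_rfl

theorem PsiW_append (u v : List X) :
    PsiW r (u ++ v) = PsiW r u ++ PsiW r (v.map (pLam r u)) := by
  have key : ∀ (n : ℕ) (u v : List X), u.length ≤ n →
      PsiW r (u ++ v) = PsiW r u ++ PsiW r (v.map (pLam r u)) := by
    intro n
    induction n with
    | zero =>
        intro u v hu
        rw [List.length_eq_zero_iff.mp (Nat.le_zero.mp hu)]
        simp
    | succ n ih =>
        intro u v hu
        match u with
        | [] => simp
        | x :: u' =>
            have hlen : (u'.map (pinv (lmap r x))).length ≤ n := by
              simp only [List.length_map]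
              exact Nat.succ_le_succ_iff.mp (by simpa using hu)
            rw [List.cons_append, PsiW_cons, List.map_append, ih _ _ hlen, PsiW_cons,
              List.cons_append, pLam_cons, List.map_map]
  exact key u.length u v le_rfl

theorem pLam_append (u v : List X) :
    pLam r (u ++ v) = pLam r (v.map (pLam r u)) ∘ pLam r u := by
  have key : ∀ (n : ℕ) (u v : List X), u.length ≤ n →
      pLam r (u ++ v) = pLam r (v.map (pLam r u)) ∘ pLam r u := by
    intro n
    induction n with
    | zero =>
        intro u v hu
        rw [List.length_eq_zero_iff.mp (Nat.le_zero.mp hu)]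
        simp
    | succ n ih =>
        intro u v hu
        match u with
        | [] => simp
        | x :: u' =>
            have hlen : (u'.map (pinv (lmap r x))).length ≤ n := by
              simp only [List.length_map]
              exact Nat.succ_le_succ_iff.mp (by simpa using hu)
            rw [List.cons_append, pLam_cons, List.map_append, ih _ _ hlen, pLam_cons,
              List.map_map, Function.comp_assoc]
  exact key u.length u v le_rfl

theorem pinv_comp_eq {f g f' g' : X → X} (hf : Function.Bijective f)
    (hg : Function.Bijective g) (hf' : Function.Bijective f') (hg' : Function.Bijective g')
    (hh : f ∘ g = f' ∘ g') : pinv g ∘ pinv f = pinv g' ∘ pinv f' := by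
  funext s
  have h1 : f (g (pinv g (pinv f s))) = s := by rw [pinv_right hg, pinv_right hf]
  have h2 : f' (g' (pinv g' (pinv f' s))) = s := by rw [pinv_right hg', pinv_right hf']
  have h3 : f' (g' (pinv g (pinv f s))) = s := by
    have := congrFun hh (pinv g (pinv f s))
    simp only [Function.comp_apply] at this
    rw [← this, h1]
  exact hg'.1 (hf'.1 (h3.trans h2.symm))

/-- The key two-letter computation for the inverse cocycle. -/
theorem psi_pair (h : IsYB r) (hlnd : LeftNonDeg r) (a b : X) :
    WM r (PsiW r [a, b]) = WM r (PsiW r [b, sigmaMap r b a]) ∧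
      pLam r [a, b] = pLam r [b, sigmaMap r b a] := by
  have hPsiPair : ∀ z w : X, PsiW r [z, w] = [z, pinv (lmap r z) w] := by
    intro z w
    rw [PsiW_cons, List.map_cons, List.map_nil, PsiW_cons, List.map_nil, PsiW_nil]
  have hsig : sigmaMap r b a = lmap r b (rmap r (pinv (lmap r a) b) a) := rfl
  have hpb : pinv (lmap r b) (sigmaMap r b a) = rmap r (pinv (lmap r a) b) a := by
    rw [hsig, pinv_left (hlnd b)]
  constructor
  · rw [hPsiPair, hPsiPair, hpb]
    have := WM_rel r a (pinv (lmap r a) b)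
    rw [pinv_right (hlnd a)] at this
    exact this
  · have e1 : pLam r [a, b] = pinv (lmap r (pinv (lmap r a) b)) ∘ pinv (lmap r a) := by
      rw [pLam_cons, List.map_cons, List.map_nil, pLam_cons, List.map_nil, pLam_nil]
      simp
    have e2 : pLam r [b, sigmaMap r b a] =
        pinv (lmap r (rmap r (pinv (lmap r a) b) a)) ∘ pinv (lmap r b) := by
      rw [pLam_cons, List.map_cons, List.map_nil, pLam_cons, List.map_nil, pLam_nil, hpb]
      simp
    rw [e1, e2]
    refine pinv_comp_eq (hlnd a) (hlnd _) (hlnd b) (hlnd _) ?_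
    funext t
    have := lmap_lmap h a (pinv (lmap r a) b) t
    rw [pinv_right (hlnd a)] at this
    simpa using this.symm

theorem psi_invariant (h : IsYB r) (hlnd : LeftNonDeg r) :
    ∀ w₁ w₂ : FreeMonoid X, structCon (dmap r) w₁ w₂ → ∀ f : X → X, CompatI r f →
      WM r (PsiW r ((FreeMonoid.toList w₁).map f)) =
        WM r (PsiW r ((FreeMonoid.toList w₂).map f)) ∧
      pLam r ((FreeMonoid.toList w₁).map f) = pLam r ((FreeMonoid.toList w₂).map f) := by
  intro w₁ w₂ hc
  induction hc with
  | of u v huv =>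
      obtain ⟨x, y, rfl, rfl⟩ := huv
      intro f hf
      show WM r (PsiW r [f x, f y]) = WM r (PsiW r [f y, f (sigmaMap r y x)]) ∧
        pLam r [f x, f y] = pLam r [f y, f (sigmaMap r y x)]
      rw [hf y x]
      exact psi_pair r h hlnd (f x) (f y)
  | refl w => exact fun f hf => ⟨rfl, rfl⟩
  | symm _ ih => exact fun f hf => ⟨(ih f hf).1.symm, (ih f hf).2.symm⟩
  | trans _ _ ih1 ih2 => exact fun f hf => ⟨(ih1 f hf).1.trans (ih2 f hf).1,
      (ih1 f hf).2.trans (ih2 f hf).2⟩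
  | mul _ _ ih1 ih2 =>
      rename_i a b c d _ _
      intro f hf
      have hta : (FreeMonoid.toList (a * c)).map f =
          (FreeMonoid.toList a).map f ++ (FreeMonoid.toList c).map f := by
        rw [FreeMonoid.toList_mul, List.map_append]
      have htb : (FreeMonoid.toList (b * d)).map f =
          (FreeMonoid.toList b).map f ++ (FreeMonoid.toList d).map f := by
        rw [FreeMonoid.toList_mul, List.map_append]
      have hfa := compatI_comp (pLam_compat r h hlnd ((FreeMonoid.toList a).map f)) hf
      constructor
      · rw [hta, htb, PsiW_append, PsiW_append, WM_append, WM_append,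
          (ih1 f hf).1, List.map_map, List.map_map, (ih1 f hf).2,
          (ih2 (pLam r ((FreeMonoid.toList b).map f) ∘ f)
            (by rw [← (ih1 f hf).2]; exact hfa)).1]
      · rw [hta, htb, pLam_append, pLam_append, (ih1 f hf).2, List.map_map, List.map_map,
          (ih2 (pLam r ((FreeMonoid.toList b).map f) ∘ f)
            (by rw [← (ih1 f hf).2]; exact hfa)).2]

end Psi

section Final

variable {X : Type} (r : X × X → X × X)

theorem piM_inj (h : IsYB r) (hlnd : LeftNonDeg r) :
    Function.Injective (piM r h hlnd) := by
  intro m₁ m₂ he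
  obtain ⟨u, rfl⟩ := WM_surjective r m₁
  obtain ⟨v, rfl⟩ := WM_surjective r m₂
  rw [piM_WM, piM_WM] at he
  have hc : structCon (dmap r) (FreeMonoid.ofList (PhiW r u)) (FreeMonoid.ofList (PhiW r v)) :=
    (Con.eq _).1 he
  have hkey := (psi_invariant r h hlnd _ _ hc id compatI_id).1
  rw [FreeMonoid.toList_ofList, FreeMonoid.toList_ofList, List.map_id, List.map_id,
    PsiW_PhiW hlnd, PsiW_PhiW hlnd] at hkey
  exact hkey

theorem piM_psiW (h : IsYB r) (hlnd : LeftNonDeg r) (l : List X) :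
    piM r h hlnd (WM r (PsiW r l)) = WA r l := by
  rw [piM_WM, PhiW_PsiW hlnd]

theorem wqo_ldvd_M [Fintype X] (h : IsYB r) (hlnd : LeftNonDeg r) (g : ℕ → SM r) :
    ∃ i j, i < j ∧ ∃ c, g j = g i * c := by
  obtain ⟨i, j, hij, d, hd⟩ := wqo_ldvd_A r (fun n => piM r h hlnd (g n))
  have hFc : CompatI r (lamM r h hlnd (g i)) := lamM_compat r h hlnd (g i)
  have hFb : Function.Bijective (lamM r h hlnd (g i)) := lamM_bij r h hlnd (g i)
  have hpFc : CompatI r (pinv (lamM r h hlnd (g i))) := compatI_pinv hFb hFc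
  obtain ⟨le, hle⟩ := WA_surjective r (mapA r _ hpFc d)
  refine ⟨i, j, hij, WM r (PsiW r le), piM_inj r h hlnd ?_⟩
  have hcomp : lamM r h hlnd (g i) ∘ pinv (lamM r h hlnd (g i)) = id :=
    funext fun t => pinv_right hFb t
  rw [piM_mul, piM_psiW, hle, mapA_comp, mapA_congr r _ compatI_id hcomp, mapA_id]
  exact hd

theorem accRight_M [Fintype X] (h : IsYB r) (hlnd : LeftNonDeg r) : ACCRight (SM r) :=
  accRight_of_wqo (wqo_ldvd_M r h hlnd)

end Final


/-- For a finite left non-degenerate set-theoretic solution `(X,r)` of the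
Yang–Baxter equation, both the left derived structure monoid `A(X,r)` and the structure
monoid `M(X,r)` satisfy the ascending chain condition on right ideals, and `A(X,r)` also
satisfies the ascending chain condition on left ideals. -/
theorem statement_0 {X : Type} [Fintype X] (r : X × X → X × X)
    (hr : IsYB r) (hlnd : LeftNonDeg r) :
    ACCRight (SM (dmap r)) ∧ ACCRight (SM r) ∧ ACCLeft (SM (dmap r)) :=
  ⟨accRight_A r, accRight_M r hr hlnd, accLeft_A r⟩

end YBE
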